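/- Let w, w' ∈ S_n with α = code(w) and α' = code(w'). Then w covers w' in the strong Bruhat order with w = w'·(i,j) (the transposition of positions i < j) if and only if α covers α' in position (i,j) in the composition covering relation. Consequently, the strong Bruhat order on S_n is isomorphic, via the Lehmer code, to the poset PC_n on C_n. -/

import Mathlib

/-- The matrix `c_{i,j}(α)` defined recursively in `j`. -/
def cmat (α : ℕ → ℕ) (i : ℕ) : ℕ → ℕ
  | 0 => 0
  | j + 1 =>
    if j + 1 ≤ i + 1 then 0
    else cmat α i j + if α j < α i - cmat α i j then 1 else 0

/-- `α` covers `α'` in position `(i,j)`: conditions (a1)–(a4). -/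
def CoversAt (α α' : ℕ → ℕ) (i j : ℕ) : Prop :=
  1 ≤ i ∧ i < j ∧
  α' i + 1 ≤ α i ∧
  α' j + α' i + 1 = α j + α i ∧
  (∀ k, k ≠ i → k ≠ j → α' k = α k) ∧
  cmat α i j = cmat α' i j ∧
  cmat α i j + α j = α' i

/-- The partial order `≤_A` on compositions: the reflexive-transitive
closure of the covering relation. -/
def leA (α' α : ℕ → ℕ) : Prop :=
  Relation.ReflTransGen (fun x y => ∃ i j, CoversAt y x i j) α' α

/-- The Lehmer code of a permutation of `Fin n`. -/
def lehmer {n : ℕ} (w : Equiv.Perm (Fin n)) (i : Fin n) : ℕ :=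
  (Finset.univ.filter (fun k : Fin n => i < k ∧ w k < w i)).card

/-- Number of inversions (the length) of a permutation. -/
def nInv {n : ℕ} (w : Equiv.Perm (Fin n)) : ℕ :=
  (Finset.univ.filter (fun p : Fin n × Fin n => p.1 < p.2 ∧ w p.2 < w p.1)).card

/-- One step in the Bruhat order: right multiplication by a transposition
that increases the length. -/
def bruhatStep {n : ℕ} (u v : Equiv.Perm (Fin n)) : Prop :=
  (∃ i j : Fin n, i ≠ j ∧ v = u * Equiv.swap i j) ∧ nInv u < nInv v

/-- The strong Bruhat order on `S_n`. -/
def bruhatLE {n : ℕ} (u v : Equiv.Perm (Fin n)) : Prop :=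
  Relation.ReflTransGen bruhatStep u v

/-- `w` covers `w'` in the strong Bruhat order. -/
def bruhatCovers {n : ℕ} (w w' : Equiv.Perm (Fin n)) : Prop :=
  bruhatLE w' w ∧ nInv w = nInv w' + 1

/-- The Lehmer code of `w ∈ S_n`, as a function on 1-based positions in `ℕ`. -/
def codeP (n : ℕ) (w : Equiv.Perm (Fin n)) (i : ℕ) : ℕ :=
  if h : 1 ≤ i ∧ i ≤ n then
    (Finset.univ.filter (fun k : Fin n => i ≤ k.val ∧ w k < w ⟨i - 1, by omega⟩)).card
  else 0

/-!
For `i < j` and `u i < u j`, passing from `u` to `u * swap i j` raises the number of inversions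
by `2 b + 1`, where `b` counts the positions between `i` and `j` holding a value between `u i` and
`u j`. Hence `u * swap i j` covers `u` exactly when `b = 0`, and every Bruhat step splits into such
covers by moving the in-between values one at a time.

On the code side, `cmat (codeP n w) (i + 1) (m + 1)` counts the positions in `(i, m)` holding a
value below `w i`. Read this way, the covering conditions between `code w` and `code (w * swap i j)`
say precisely that `w j < w i` and that no position between `i` and `j` holds a value between
`w j` and `w i`: the code is then unchanged outside `{i, j}`, while at the rightmost such position
the counts `cmat` of the two codes would drift apart.
-/

open Finset Equiv

variable {n : ℕ}

lemma card_filter_add_ite_add_ite {α : Type*} [Fintype α] [DecidableEq α] {p q : α → Prop}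
    [DecidablePred p] [DecidablePred q] {a b : α} (hab : a ≠ b)
    (h : ∀ x, x ≠ a → x ≠ b → (p x ↔ q x)) :
    #{x | p x} + (if q a then 1 else 0) + (if q b then 1 else 0)
      = #{x | q x} + (if p a then 1 else 0) + (if p b then 1 else 0) := by
  have hrest : ∑ x ∈ {a, b}ᶜ, (if p x then 1 else 0) = ∑ x ∈ {a, b}ᶜ, if q x then 1 else 0 :=
    sum_congr rfl fun x hx => by
      simp only [mem_compl, mem_insert, mem_singleton, not_or] at hx
      simp only [h x hx.1 hx.2]
  simp only [card_filter, ← sum_compl_add_sum {a, b}, sum_pair hab, hrest]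
  ring

lemma card_filter_apply_lt (u : Perm (Fin n)) (a : Fin n) : #{k | u k < a} = a.val := by
  rw [← Fin.card_Iio a]
  exact card_equiv u fun k => by simp

section LehmerCode

@[simp]
lemma codeP_succ (w : Perm (Fin n)) (i : Fin n) : codeP n w (i.val + 1) = lehmer w i := by
  rw [codeP, dif_pos ⟨by omega, i.isLt⟩]
  rfl

lemma codeP_eq_zero {k : ℕ} (w : Perm (Fin n)) (h : ¬(1 ≤ k ∧ k ≤ n)) : codeP n w k = 0 := by
  rw [codeP, dif_neg h]

/-- Both `u` and `v` have exactly `v i` values below `v i`, and they have equally many of them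
before `i`. From `i` on, those of `v` are the ones counted by `lehmer v i`, while those of `u`
include `i` itself and all those counted by `lehmer u i`. -/
lemma lehmer_lt_lehmer_of_apply_lt {u v : Perm (Fin n)} {i : Fin n}
    (hagree : ∀ k < i, u k = v k) (h : u i < v i) : lehmer u i < lehmer v i := by
  have hsplit : ∀ w : Perm (Fin n), #{k | w k < v i}
      = #{k | k < i ∧ w k < v i} + #{k | i ≤ k ∧ w k < v i} := fun w => by
    rw [← card_filter_add_card_filter_not (fun k : Fin n => k < i), filter_filter, filter_filter]
    congr 2 <;> ext k <;> simp [and_comm]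
  have hhead : #{k | k < i ∧ u k < v i} = #{k | k < i ∧ v k < v i} := by
    congr 1; ext k; simp only [mem_filter, mem_univ, true_and]; grind
  have htail : #{k | i ≤ k ∧ u k < v i} = #{k | i ≤ k ∧ v k < v i} := by
    have hu := hsplit u
    have hv := hsplit v
    rw [card_filter_apply_lt] at hu hv
    omega
  have hv : #{k | i ≤ k ∧ v k < v i} = lehmer v i := by
    rw [lehmer]; congr 1; ext k; simp only [mem_filter, mem_univ, true_and]; grind
  have hu : lehmer u i + 1 ≤ #{k | i ≤ k ∧ u k < v i} := by
    rw [lehmer, ← card_insert_of_notMem (a := i) (by simp)]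
    refine card_le_card fun k => ?_
    simp only [mem_insert, mem_filter, mem_univ, true_and]
    grind
  omega

lemma lehmer_injective : Function.Injective (lehmer : Perm (Fin n) → Fin n → ℕ) := by
  intro u v h
  ext x : 1
  induction x using WellFoundedLT.induction with
  | ind x ih =>
    rcases lt_trichotomy (u x) (v x) with hlt | heq | hgt
    · exact absurd (congrFun h x) (lehmer_lt_lehmer_of_apply_lt ih hlt).ne
    · exact heq
    · exact absurd (congrFun h x)
        (lehmer_lt_lehmer_of_apply_lt (fun k hk => (ih k hk).symm) hgt).ne'

lemma codeP_injective : Function.Injective (codeP n) := fun u v h =>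
  lehmer_injective <| funext fun k => by simpa using congrFun h (k.val + 1)

lemma nInv_eq_sum_lehmer (w : Perm (Fin n)) : nInv w = ∑ i, lehmer w i := by
  simp only [nInv, lehmer, card_filter, Fintype.sum_prod_type]

end LehmerCode

def betweenCount (u : Perm (Fin n)) (i j : Fin n) : ℕ :=
  #{k | i < k ∧ k < j ∧ u i < u k ∧ u k < u j}

lemma betweenCount_eq_zero_iff {u : Perm (Fin n)} {i j : Fin n} :
    betweenCount u i j = 0 ↔ ∀ k, i < k → k < j → ¬(u i < u k ∧ u k < u j) := by
  simp [betweenCount, filter_eq_empty_iff]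

section Transposition

variable {u : Perm (Fin n)} {i j : Fin n}

lemma lehmer_mul (u σ : Perm (Fin n)) (k : Fin n) :
    lehmer (u * σ) k = #{m | k < σ.symm m ∧ u m < u (σ k)} := by
  rw [lehmer]
  exact card_equiv σ fun m => by rw [mem_filter, mem_filter]; simp

lemma lehmer_mul_swap_of_ne (hij : i < j) (hu : u i < u j) {k : Fin n} (hki : k ≠ i)
    (hkj : k ≠ j) :
    lehmer (u * swap i j) k
      = lehmer u k + if i < k ∧ k < j ∧ u i < u k ∧ u k < u j then 1 else 0 := by
  have key := card_filter_add_ite_add_ite (p := fun m => k < swap i j m ∧ u m < u k)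
    (q := fun m => k < m ∧ u m < u k) hij.ne fun m hmi hmj => by
      rw [swap_apply_of_ne_of_ne hmi hmj]
  rw [lehmer_mul, symm_swap, swap_apply_of_ne_of_ne hki hkj, lehmer]
  simp only [swap_apply_left, swap_apply_right] at key
  split_ifs at key ⊢ <;> grind [EmbeddingLike.apply_eq_iff_eq]

lemma lehmer_mul_swap_left (hij : i < j) (hu : u i < u j) :
    lehmer (u * swap i j) i = #{m | i < m ∧ u m < u j} + 1 := by
  have key := card_filter_add_ite_add_ite (p := fun m => i < swap i j m ∧ u m < u j)
    (q := fun m => i < m ∧ u m < u j) hij.ne fun m hmi hmj => by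
      rw [swap_apply_of_ne_of_ne hmi hmj]
  rw [lehmer_mul, symm_swap, swap_apply_left]
  simp only [swap_apply_left, swap_apply_right, lt_irrefl, hij, hu] at key
  simpa using key

lemma lehmer_mul_swap_right (hij : i < j) :
    lehmer (u * swap i j) j = #{m | j < m ∧ u m < u i} := by
  rw [lehmer_mul, symm_swap, swap_apply_right]
  congr 1
  ext m
  simp only [mem_filter, mem_univ, true_and]
  rw [swap_apply_def]
  split_ifs <;> grind

lemma lehmer_mul_swap_left_add_right (hij : i < j) (hu : u i < u j) :
    lehmer (u * swap i j) i + lehmer (u * swap i j) j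
      = lehmer u i + lehmer u j + betweenCount u i j + 1 := by
  have hi : #{m | i < m ∧ u m < u j}
      = lehmer u i + #{m | i < m ∧ u i < u m ∧ u m < u j} := by
    rw [lehmer, ← card_filter_add_card_filter_not (fun m => u m < u i), filter_filter,
      filter_filter]
    congr 2 <;> ext m <;> simp only [mem_filter, mem_univ, true_and] <;>
      grind [EmbeddingLike.apply_eq_iff_eq]
  have hj : lehmer u j = #{m | j < m ∧ u m < u i} + #{m | j < m ∧ u i < u m ∧ u m < u j} := by
    rw [lehmer, ← card_filter_add_card_filter_not (fun m => u m < u i), filter_filter,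
      filter_filter]
    congr 2 <;> ext m <;> simp only [mem_filter, mem_univ, true_and] <;>
      grind [EmbeddingLike.apply_eq_iff_eq]
  have hmid : #{m | i < m ∧ u i < u m ∧ u m < u j}
      = betweenCount u i j + #{m | j < m ∧ u i < u m ∧ u m < u j} := by
    rw [betweenCount, ← card_filter_add_card_filter_not (fun m => m < j), filter_filter,
      filter_filter]
    congr 2 <;> ext m <;> simp only [mem_filter, mem_univ, true_and] <;>
      grind [EmbeddingLike.apply_eq_iff_eq]
  rw [lehmer_mul_swap_left hij hu, lehmer_mul_swap_right hij]
  omega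

theorem nInv_mul_swap (hij : i < j) (hu : u i < u j) :
    nInv (u * swap i j) = nInv u + 2 * betweenCount u i j + 1 := by
  have hcount : betweenCount u i j
      = ∑ k ∈ {i, j}ᶜ, if i < k ∧ k < j ∧ u i < u k ∧ u k < u j then 1 else 0 := by
    rw [betweenCount, card_filter, ← sum_compl_add_sum {i, j}, sum_pair hij.ne]
    simp
  have hrest : ∑ k ∈ {i, j}ᶜ, lehmer (u * swap i j) k
      = ∑ k ∈ {i, j}ᶜ, lehmer u k + betweenCount u i j := by
    rw [hcount, ← sum_add_distrib]
    refine sum_congr rfl fun k hk => ?_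
    simp only [mem_compl, mem_insert, mem_singleton, not_or] at hk
    exact lehmer_mul_swap_of_ne hij hu hk.1 hk.2
  have hpair := lehmer_mul_swap_left_add_right hij hu
  simp only [nInv_eq_sum_lehmer, ← sum_compl_add_sum {i, j}, sum_pair hij.ne, hrest]
  omega

lemma lt_of_nInv_lt_nInv_mul_swap (hij : i < j) (h : nInv u < nInv (u * swap i j)) :
    u i < u j := by
  by_contra! hle
  have hlt : (u * swap i j) i < (u * swap i j) j := by
    simpa using hle.lt_of_ne (u.injective.ne hij.ne')
  have := nInv_mul_swap hij hlt
  rw [mul_swap_mul_self] at this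
  omega

theorem bruhatCovers_mul_swap_iff (hij : i < j) :
    bruhatCovers (u * swap i j) u ↔ u i < u j ∧ betweenCount u i j = 0 := by
  constructor
  · rintro ⟨-, hlen⟩
    have hu := lt_of_nInv_lt_nInv_mul_swap hij (u := u) (by omega)
    have := nInv_mul_swap hij hu
    exact ⟨hu, by omega⟩
  · rintro ⟨hu, h0⟩
    have hlen := nInv_mul_swap hij hu
    exact ⟨.single ⟨⟨i, j, hij.ne, rfl⟩, by omega⟩, by omega⟩

end Transposition

section CMatrix

variable {α α' : ℕ → ℕ} {I J m : ℕ}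

lemma cmat_of_le (h : m ≤ I + 1) : cmat α I m = 0 := by
  cases m with
  | zero => rfl
  | succ m => rw [cmat, if_pos h]

lemma cmat_succ (h : I < m) :
    cmat α I (m + 1) = cmat α I m + if α m < α I - cmat α I m then 1 else 0 := by
  rw [cmat, if_neg (by omega)]

lemma cmat_le (α : ℕ → ℕ) (I m : ℕ) : cmat α I m ≤ α I := by
  induction m with
  | zero => exact Nat.zero_le _
  | succ m ih =>
    rcases le_or_gt m I with h | h
    · rw [cmat_of_le (by omega)]; exact Nat.zero_le _
    · rw [cmat_succ h]; split_ifs <;> omega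

lemma cmat_mono (α : ℕ → ℕ) (I : ℕ) : Monotone (cmat α I) := by
  refine monotone_nat_of_le_succ fun m => ?_
  rcases le_or_gt m I with h | h
  · rw [cmat_of_le (by omega)]; exact Nat.zero_le _
  · rw [cmat_succ h]; exact Nat.le_add_right _ _

lemma cmat_le_cmat_and_le (hoff : ∀ m, I < m → m < J → α' m = α m) (hle : α' I ≤ α I)
    (hm : m ≤ J) :
    cmat α' I m ≤ cmat α I m ∧ α' I + cmat α I m ≤ α I + cmat α' I m := by
  induction m with
  | zero => simpa [cmat] using hle
  | succ m ih =>
    rcases le_or_gt m I with h | h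
    · simp only [cmat_of_le (show m + 1 ≤ I + 1 by omega)]; omega
    · have := ih (by omega)
      rw [cmat_succ h, cmat_succ h, hoff m h (by omega)]
      have := cmat_le α I m
      have := cmat_le α' I m
      split_ifs <;> omega

lemma cmat_eq_cmat_of_le (hoff : ∀ m, I < m → m < J → α' m = α m) (hle : α' I ≤ α I)
    (hJ : cmat α I J = cmat α' I J) (hm : m ≤ J) : cmat α I m = cmat α' I m := by
  -- `cmat α I - cmat α' I` is nonnegative and nondecreasing on `[0, J]`.
  induction hm using Nat.decreasingInduction with
  | self => exact hJ
  | of_succ m hmJ ih =>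
    have := cmat_le_cmat_and_le hoff hle hmJ.le
    rcases le_or_gt m I with h | h
    · rw [cmat_of_le (by omega), cmat_of_le (by omega)]
    · rw [cmat_succ h, cmat_succ h, hoff m h hmJ] at ih
      have := cmat_le α I m
      have := cmat_le α' I m
      split_ifs at ih <;> omega

end CMatrix

def lehmerBefore (w : Perm (Fin n)) (i : Fin n) (m : ℕ) : ℕ :=
  #{k | i < k ∧ k.val < m ∧ w k < w i}

def lehmerFrom (w : Perm (Fin n)) (i : Fin n) (m : ℕ) : ℕ :=
  #{k | m ≤ k.val ∧ w k < w i}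

section CodeMatrix

variable {w : Perm (Fin n)} {i : Fin n}

lemma lehmerBefore_add_lehmerFrom {m : ℕ} (h : i.val < m) :
    lehmerBefore w i m + lehmerFrom w i m = lehmer w i := by
  rw [lehmer, ← card_filter_add_card_filter_not (fun k : Fin n => k.val < m), filter_filter,
    filter_filter, lehmerBefore, lehmerFrom]
  congr 2 <;> ext k <;> simp only [mem_filter, mem_univ, true_and] <;> grind

lemma lehmerBefore_of_le {m : ℕ} (h : n ≤ m) : lehmerBefore w i m = lehmer w i := by
  rw [lehmerBefore, lehmer]
  congr 1
  ext k
  simp only [mem_filter, mem_univ, true_and]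
  grind

lemma lehmerBefore_succ {p : Fin n} (hip : i < p) :
    lehmerBefore w i (p.val + 1) = lehmerBefore w i p.val + if w p < w i then 1 else 0 := by
  rw [lehmerBefore, lehmerBefore, ← card_filter_add_card_filter_not (fun k : Fin n => k < p),
    filter_filter, filter_filter]
  congr 1
  · congr 1; ext k; simp only [mem_filter, mem_univ, true_and]; grind
  · split_ifs with h
    · refine card_eq_one.2 ⟨p, ?_⟩
      ext k
      simp only [mem_filter, mem_univ, true_and, mem_singleton]
      grind
    · refine card_eq_zero.2 ?_
      ext k
      simp only [mem_filter, mem_univ, true_and, notMem_empty, iff_false]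
      grind

lemma lehmer_lt_lehmerFrom_iff {p : Fin n} (hip : i < p) :
    lehmer w p < lehmerFrom w i p.val ↔ w p < w i := by
  constructor
  · intro hlt
    by_contra! hle
    refine hlt.not_ge (card_le_card fun k => ?_)
    simp only [mem_filter, mem_univ, true_and]
    grind [EmbeddingLike.apply_eq_iff_eq]
  · intro hp
    rw [lehmer, Nat.lt_iff_add_one_le, ← card_insert_of_notMem (a := p) (by simp)]
    refine card_le_card fun k => ?_
    simp only [mem_insert, mem_filter, mem_univ, true_and]
    grind

lemma cmat_codeP_succ (w : Perm (Fin n)) (i : Fin n) {m : ℕ} (hm : m ≤ n) :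
    cmat (codeP n w) (i.val + 1) (m + 1) = lehmerBefore w i m := by
  induction m with
  | zero => exact (card_eq_zero.2 (by ext k; simp)).symm
  | succ m ih =>
    rcases le_or_gt m i.val with h | h
    · rw [cmat_of_le (by omega), lehmerBefore, eq_comm, card_eq_zero]
      ext k
      simp only [mem_filter, mem_univ, true_and, notMem_empty, iff_false]
      grind
    · obtain ⟨p, rfl⟩ : ∃ p : Fin n, p.val = m := ⟨⟨m, hm⟩, rfl⟩
      rw [cmat_succ (by omega), ih (by omega), codeP_succ, codeP_succ, lehmerBefore_succ h,
        ← lehmerBefore_add_lehmerFrom h, Nat.add_sub_cancel_left]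
      simp only [lehmer_lt_lehmerFrom_iff h]

end CodeMatrix

lemma CoversAt.eq {α β γ : ℕ → ℕ} {I J : ℕ} (hβ : CoversAt α β I J) (hγ : CoversAt α γ I J) :
    β = γ := by
  obtain ⟨-, -, -, hsumβ, hoffβ, -, hvalβ⟩ := hβ
  obtain ⟨-, -, -, hsumγ, hoffγ, -, hvalγ⟩ := hγ
  funext k
  by_cases hkI : k = I
  · subst hkI; omega
  by_cases hkJ : k = J
  · subst hkJ; omega
  rw [hoffβ k hkI hkJ, hoffγ k hkI hkJ]

theorem coversAt_codeP_mul_swap {u : Perm (Fin n)} {i j : Fin n} (hij : i < j) (hu : u i < u j)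
    (h0 : betweenCount u i j = 0) :
    CoversAt (codeP n (u * swap i j)) (codeP n u) (i.val + 1) (j.val + 1) := by
  have hmid := betweenCount_eq_zero_iff.1 h0
  have hleft := lehmer_mul_swap_left hij hu
  have hright := lehmer_mul_swap_right (u := u) hij
  have hpair := lehmer_mul_swap_left_add_right hij hu
  have hle : lehmer u i ≤ #{m | i < m ∧ u m < u j} :=
    card_le_card fun m => by simp only [mem_filter, mem_univ, true_and]; grind
  have hbefore : lehmerBefore (u * swap i j) i j = lehmerBefore u i j := by
    rw [lehmerBefore, lehmerBefore]
    congr 1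
    ext k
    simp only [mem_filter, mem_univ, true_and, Perm.mul_apply, swap_apply_left]
    rw [swap_apply_def]
    split_ifs <;> grind [EmbeddingLike.apply_eq_iff_eq]
  have hfrom : lehmerFrom u i j = #{m | j < m ∧ u m < u i} := by
    rw [lehmerFrom]
    congr 1
    ext k
    simp only [mem_filter, mem_univ, true_and]
    grind
  have hsplit := lehmerBefore_add_lehmerFrom (w := u) (m := j) hij
  have hcmat := cmat_codeP_succ (u * swap i j) i j.isLt.le
  refine ⟨by omega, by omega, ?_, ?_, fun k hki hkj => ?_, ?_, ?_⟩
  · simp only [codeP_succ]; omega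
  · simp only [codeP_succ]; omega
  · by_cases hk : 1 ≤ k ∧ k ≤ n
    · obtain ⟨p, rfl⟩ : ∃ p : Fin n, p.val + 1 = k := ⟨⟨k - 1, by omega⟩, by simp; omega⟩
      have hpi : p ≠ i := fun h => hki (by rw [h])
      have hpj : p ≠ j := fun h => hkj (by rw [h])
      rw [codeP_succ, codeP_succ, lehmer_mul_swap_of_ne hij hu hpi hpj, if_neg]
      · simp only [add_zero]
      · exact fun ⟨h1, h2, h3⟩ => hmid p h1 h2 h3
    · rw [codeP_eq_zero _ hk, codeP_eq_zero _ hk]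
  · rw [hcmat, cmat_codeP_succ u i j.isLt.le, hbefore]
  · rw [hcmat, codeP_succ, codeP_succ, hbefore, hright]
    omega

section Backward

variable {w : Perm (Fin n)} {i j : Fin n}

lemma lehmerBefore_add_lehmer_le {K : Fin n} (hiK : i < K) (hKj : K < j) (hjK : w j < w K)
    (hKi : w K < w i) (hmax : ∀ m, K < m → m < j → w m < w i → w m < w K) :
    lehmerBefore w i j + lehmer w j ≤ lehmerBefore w i K + lehmer w K := by
  set X := #{m | K < m ∧ m < j ∧ w m < w i}
  have hbefore : lehmerBefore w i j = lehmerBefore w i (K.val + 1) + X := by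
    rw [lehmerBefore, lehmerBefore,
      ← card_filter_add_card_filter_not (fun k : Fin n => k.val < K.val + 1), filter_filter,
      filter_filter]
    congr 2 <;> ext k <;> simp only [mem_filter, mem_univ, true_and] <;> grind
  have hK : X + #(insert j ({m | j < m ∧ w m < w j} : Finset _)) ≤ lehmer w K := by
    rw [← card_union_of_disjoint (disjoint_left.2 fun m => by simp; grind)]
    refine card_le_card fun m => ?_
    simp only [mem_union, mem_insert, mem_filter, mem_univ, true_and]
    grind
  rw [card_insert_of_notMem (by simp)] at hK
  rw [hbefore, lehmerBefore_succ hiK, if_pos hKi]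
  change X + (lehmer w j + 1) ≤ lehmer w K at hK
  omega

lemma forall_not_between_of_cmat_eq {α' : ℕ → ℕ}
    (hoff : ∀ m, i.val + 1 < m → m < j.val + 1 → α' m = codeP n w m)
    (hle : α' (i.val + 1) ≤ codeP n w (i.val + 1))
    (hcmat : cmat (codeP n w) (i.val + 1) (j.val + 1) = cmat α' (i.val + 1) (j.val + 1))
    (hval : cmat (codeP n w) (i.val + 1) (j.val + 1) + codeP n w (j.val + 1) = α' (i.val + 1)) :
    ∀ k, i < k → k < j → ¬(w j < w k ∧ w k < w i) := by
  -- At the rightmost offending position `K` the count `cmat` of `code w` steps up; as the counts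
  -- of `code w` and `α'` agree up to `j + 1`, so does that of `α'`, which is too much by
  -- `lehmerBefore_add_lehmer_le`.
  intro k hik hkj hk
  obtain ⟨K, hKS, hKmax⟩ := exists_max_image {m | i < m ∧ m < j ∧ w j < w m ∧ w m < w i} id
    ⟨k, by simp [hik, hkj, hk]⟩
  simp only [mem_filter, mem_univ, true_and, id] at hKS hKmax
  obtain ⟨hiK, hKj, hjK, hKi⟩ := hKS
  have hmax : ∀ m, K < m → m < j → w m < w i → w m < w K := fun m h1 h2 h3 => by
    by_contra! h4
    exact (hKmax m ⟨hiK.trans h1, h2, hjK.trans_le h4, h3⟩).not_gt h1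
  have hcount := lehmerBefore_add_lehmer_le hiK hKj hjK hKi hmax
  have hK : i.val + 1 < K.val + 1 := by simpa using hiK
  have hstep := cmat_eq_cmat_of_le hoff hle hcmat (m := K.val + 1 + 1) (by simpa using hKj)
  rw [cmat_succ hK, cmat_succ hK, hoff _ hK (by simpa using hKj),
    ← cmat_eq_cmat_of_le hoff hle hcmat (by simpa using hKj.le)] at hstep
  rw [cmat_codeP_succ w i K.isLt.le, codeP_succ, codeP_succ,
    ← lehmerBefore_add_lehmerFrom hiK, Nat.add_sub_cancel_left,
    if_pos ((lehmer_lt_lehmerFrom_iff hiK).2 hKi)] at hstep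
  rw [cmat_codeP_succ w i j.isLt.le, codeP_succ] at hval
  split_ifs at hstep <;> omega

lemma exists_of_coversAt_codeP {α' : ℕ → ℕ} {I J : ℕ} (h : CoversAt (codeP n w) α' I J) :
    ∃ i j : Fin n, I = i.val + 1 ∧ J = j.val + 1 ∧ i < j ∧ w j < w i ∧
      ∀ k, i < k → k < j → ¬(w j < w k ∧ w k < w i) := by
  obtain ⟨hI, hIJ, hlt, -, hoff, hcmat, hval⟩ := h
  have hIn : I ≤ n := by
    by_contra
    rw [codeP_eq_zero _ (by omega)] at hlt
    omega
  obtain ⟨i, rfl⟩ : ∃ i : Fin n, I = i.val + 1 := ⟨⟨I - 1, by omega⟩, by simp; omega⟩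
  have hJn : J ≤ n := by
    by_contra
    have hmono := cmat_mono (codeP n w) (i.val + 1) (show n + 1 ≤ J by omega)
    rw [cmat_codeP_succ w i le_rfl, lehmerBefore_of_le le_rfl] at hmono
    rw [codeP_eq_zero _ (by omega)] at hval
    have := cmat_le (codeP n w) (i.val + 1) J
    simp only [codeP_succ] at hlt hmono this
    omega
  obtain ⟨j, rfl⟩ : ∃ j : Fin n, J = j.val + 1 := ⟨⟨J - 1, by omega⟩, by simp; omega⟩
  have hij : i < j := by simpa using hIJ
  have hd : w j < w i := by
    have := lehmerBefore_add_lehmerFrom (w := w) hij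
    rw [cmat_codeP_succ w i j.isLt.le, codeP_succ] at hval
    rw [codeP_succ] at hlt
    exact (lehmer_lt_lehmerFrom_iff hij).1 (by omega)
  exact ⟨i, j, rfl, rfl, hij, hd, forall_not_between_of_cmat_eq
    (fun m h1 h2 => hoff m (by omega) (by omega)) (by omega) hcmat hval⟩

theorem CoversAt.exists_codeP_mul_swap {α' : ℕ → ℕ} {I J : ℕ}
    (h : CoversAt (codeP n w) α' I J) :
    ∃ i j : Fin n, I = i.val + 1 ∧ J = j.val + 1 ∧ i < j ∧ bruhatCovers w (w * swap i j) ∧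
      α' = codeP n (w * swap i j) := by
  obtain ⟨i, j, rfl, rfl, hij, hd, hmid⟩ := exists_of_coversAt_codeP h
  have hu : (w * swap i j) i < (w * swap i j) j := by simpa using hd
  have h0 : betweenCount (w * swap i j) i j = 0 :=
    betweenCount_eq_zero_iff.2 fun k hik hkj => by
      simpa [swap_apply_of_ne_of_ne hik.ne' hkj.ne] using hmid k hik hkj
  have hcov := (bruhatCovers_mul_swap_iff hij).2 ⟨hu, h0⟩
  have hcodes := coversAt_codeP_mul_swap hij hu h0
  rw [mul_swap_mul_self] at hcov hcodes
  exact ⟨i, j, rfl, rfl, hij, hcov, h.eq hcodes⟩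

end Backward

section Order

lemma swap_mul_swap_mul_swap_eq {α : Type*} [DecidableEq α] {i k j : α} (hij : i ≠ j)
    (hkj : k ≠ j) : swap i k * swap k j * swap i k = swap i j := by
  simpa [swap_comm] using swap_mul_swap_mul_swap (x := j) (y := k) (z := i) hkj.symm hij.symm

/-- A value `u k` strictly between `u i` and `u j` at a position `i < k < j` splits the step into
`u < u * swap i k < u * swap i k * swap k j < u * swap i j`, and by `nInv_mul_swap` each of these
three steps has fewer in-between values. -/
theorem leA_codeP_mul_swap {u : Perm (Fin n)} {i j : Fin n} (hij : i < j) (hu : u i < u j) :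
    leA (codeP n u) (codeP n (u * swap i j)) := by
  induction hM : betweenCount u i j using Nat.strong_induction_on generalizing u i j with
  | _ M ih =>
  rcases Nat.eq_zero_or_pos M with rfl | hpos
  · exact Relation.ReflTransGen.single ⟨_, _, coversAt_codeP_mul_swap hij hu hM⟩
  obtain ⟨k, hk⟩ := card_pos.1 (hM ▸ hpos : 0 < betweenCount u i j)
  simp only [mem_filter, mem_univ, true_and] at hk
  obtain ⟨hik, hkj, huik, hukj⟩ := hk
  have hv₁ : (u * swap i k) k < (u * swap i k) j := by
    simpa [swap_apply_of_ne_of_ne hij.ne' hkj.ne'] using hu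
  have hv₂ : (u * swap i k * swap k j) i < (u * swap i k * swap k j) k := by
    simpa [swap_apply_of_ne_of_ne hik.ne hij.ne, swap_apply_of_ne_of_ne hij.ne' hkj.ne']
      using hukj
  have hv : u * swap i k * swap k j * swap i k = u * swap i j := by
    rw [mul_assoc, mul_assoc, ← mul_assoc (swap i k), swap_mul_swap_mul_swap_eq hij.ne hkj.ne]
  have e₀ := nInv_mul_swap hij hu
  have e₁ := nInv_mul_swap hik huik
  have e₂ := nInv_mul_swap hkj hv₁
  have e₃ := nInv_mul_swap hik hv₂
  rw [hv] at e₃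
  refine .trans (.trans (ih _ (by omega) hik huik rfl) (ih _ (by omega) hkj hv₁ rfl)) ?_
  rw [← hv]
  exact ih _ (by omega) hik hv₂ rfl

theorem leA_codeP_of_bruhatStep {u v : Perm (Fin n)} (h : bruhatStep u v) :
    leA (codeP n u) (codeP n v) := by
  obtain ⟨⟨i, j, hne, rfl⟩, hlt⟩ := h
  rcases hne.lt_or_gt with hij | hji
  · exact leA_codeP_mul_swap hij (lt_of_nInv_lt_nInv_mul_swap hij hlt)
  · rw [swap_comm] at hlt ⊢
    exact leA_codeP_mul_swap hji (lt_of_nInv_lt_nInv_mul_swap hji hlt)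

theorem exists_bruhatLE_of_leA {α β : ℕ → ℕ} (h : leA α β) :
    ∀ w : Perm (Fin n), β = codeP n w → ∃ u, α = codeP n u ∧ bruhatLE u w := by
  induction h with
  | refl => exact fun w hw => ⟨w, hw, .refl⟩
  | tail _ hstep ih =>
    rintro w rfl
    obtain ⟨I, J, hc⟩ := hstep
    obtain ⟨i, j, -, -, -, hcov, rfl⟩ := hc.exists_codeP_mul_swap
    obtain ⟨u, rfl, hu⟩ := ih _ rfl
    exact ⟨u, rfl, Relation.ReflTransGen.trans hu hcov.1⟩

end Order

/-- `w` covers `w'` in the strong Bruhat order with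
`w = w'·(i,j)` iff `code(w)` covers `code(w')` in position `(i,j)`;
consequently the Bruhat order on `S_n` corresponds, via the Lehmer code,
to the order `≤_A` of the poset `PC_n`. -/
theorem bruhat_iff_code_covers (n : ℕ) (w w' : Equiv.Perm (Fin n)) :
    (∀ i j : Fin n, i < j →
      ((bruhatCovers w w' ∧ w = w' * Equiv.swap i j) ↔
        CoversAt (codeP n w) (codeP n w') (i.val + 1) (j.val + 1))) ∧
    (bruhatLE w' w ↔ leA (codeP n w') (codeP n w)) := by
  refine ⟨fun i j hij => ⟨?_, fun h => ?_⟩, ⟨fun h => ?_, fun h => ?_⟩⟩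
  · rintro ⟨hcov, rfl⟩
    obtain ⟨hu, h0⟩ := (bruhatCovers_mul_swap_iff hij).1 hcov
    exact coversAt_codeP_mul_swap hij hu h0
  · obtain ⟨i', j', hi, hj, -, hcov, hw'⟩ := h.exists_codeP_mul_swap
    obtain rfl : i' = i := Fin.ext (by omega)
    obtain rfl : j' = j := Fin.ext (by omega)
    obtain rfl := codeP_injective hw'
    exact ⟨hcov, (mul_swap_mul_self i' j' w).symm⟩
  · exact Relation.ReflTransGen.lift' (codeP n) (fun _ _ => leA_codeP_of_bruhatStep) _ _ h
  · obtain ⟨u, hu, hle⟩ := exists_bruhatLE_of_leA h w rfl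
    rwa [codeP_injective hu]
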